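/- arXiv:1407.4199 — 5 statements merged into one kernel-verified Lean document; each statement's English description precedes it below -/
import Mathlib

section
/- Let G be a {3K₁, K₁+C₄}-free graph and v, w non-adjacent vertices. Let A be the common neighborhood of v and w, and A₁ ⊆ A induce a maximal clique in ⟨A⟩. Then A₂ = A \ A₁ induces a complete subgraph of G. -/
open SimpleGraph

/-- `G` has no independent set of size 3: among any 3 distinct vertices, some two are adjacent. -/
def ThreeK1Free {V : Type*} (G : SimpleGraph V) : Prop :=
  ∀ a b c : V, a ≠ b → a ≠ c → b ≠ c → G.Adj a b ∨ G.Adj a c ∨ G.Adj b c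

/-- The wheel `K₁ + C₄`: hub `0` joined to the 4-cycle `1-2-3-4-1`. -/
def wheel4 : SimpleGraph (Fin 5) :=
  SimpleGraph.fromRel (fun i j =>
    i = 0 ∨ (i = 1 ∧ j = 2) ∨ (i = 2 ∧ j = 3) ∨ (i = 3 ∧ j = 4) ∨ (i = 4 ∧ j = 1))

/-- `G` has no induced subgraph isomorphic to `K₁ + C₄` (graph embeddings are induced). -/
def K1C4Free {V : Type*} (G : SimpleGraph V) : Prop :=
  IsEmpty (wheel4 ↪g G)

lemma wheel4_adj (i j : Fin 5) :
    wheel4.Adj i j ↔ i ≠ j ∧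
      ((i = 0 ∨ (i = 1 ∧ j = 2) ∨ (i = 2 ∧ j = 3) ∨ (i = 3 ∧ j = 4) ∨ (i = 4 ∧ j = 1)) ∨
       (j = 0 ∨ (j = 1 ∧ i = 2) ∨ (j = 2 ∧ i = 3) ∨ (j = 3 ∧ i = 4) ∨ (j = 4 ∧ i = 1))) :=
  SimpleGraph.fromRel_adj _ i j

theorem stmt1 {V : Type*} [Fintype V] (G : SimpleGraph V)
    (h3 : ThreeK1Free G) (h4 : K1C4Free G)
    (v w : V) (hvw : v ≠ w) (hnadj : ¬ G.Adj v w)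
    (A A₁ : Set V) (hA : A = {x | G.Adj x v ∧ G.Adj x w})
    (hA₁sub : A₁ ⊆ A) (hA₁clq : A₁.Pairwise G.Adj)
    (hA₁max : ∀ S : Set V, A₁ ⊆ S → S ⊆ A → S.Pairwise G.Adj → S = A₁) :
    (A \ A₁).Pairwise G.Adj := by
  intro x hx y hy hxy
  by_contra hnxy
  obtain ⟨hxA, hxA₁⟩ := hx
  obtain ⟨hyA, hyA₁⟩ := hy
  have hex : ∀ z : V, z ∈ A → z ∉ A₁ → ∃ a ∈ A₁, ¬ G.Adj a z := by
    intro z hz hz₁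
    by_contra hc
    push_neg at hc
    have : insert z A₁ = A₁ := by
      apply hA₁max
      · exact Set.subset_insert _ _
      · exact Set.insert_subset hz hA₁sub
      · refine Set.Pairwise.insert hA₁clq ?_
        intro a ha haz
        exact ⟨(hc a ha).symm, hc a ha⟩
    exact hz₁ (this ▸ Set.mem_insert z A₁)
  obtain ⟨ax, haxA₁, haxx⟩ := hex x hxA hxA₁
  obtain ⟨ay, hayA₁, hayy⟩ := hex y hyA hyA₁
  have haxne : ax ≠ x := fun h => hxA₁ (h ▸ haxA₁)
  have hayne : ay ≠ y := fun h => hyA₁ (h ▸ hayA₁)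
  have haxy : G.Adj ax y := by
    rcases h3 ax x y haxne (fun h => hyA₁ (h ▸ haxA₁)) hxy with h | h | h
    · exact absurd h haxx
    · exact h
    · exact absurd h hnxy
  have haxay : ax ≠ ay := by
    rintro rfl
    exact hayy haxy
  have hayx : G.Adj ay x := by
    rcases h3 ay x y (fun h => hxA₁ (h ▸ hayA₁)) hayne hxy with h | h | h
    · exact h
    · exact absurd h hayy
    · exact absurd h hnxy
  have haa : G.Adj ax ay := hA₁clq haxA₁ hayA₁ haxay
  rw [hA] at hxA hyA hA₁sub
  obtain ⟨hxv, hxw⟩ := hxA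
  obtain ⟨haxv, haxw⟩ := hA₁sub haxA₁
  obtain ⟨hayv, hayw⟩ := hA₁sub hayA₁
  -- distinctness facts for f = ![ay, v, x, w, ax]
  have n01 : ay ≠ v := hayv.ne
  have n02 : ay ≠ x := hayx.ne
  have n03 : ay ≠ w := hayw.ne
  have n04 : ay ≠ ax := haxay.symm
  have n12 : v ≠ x := hxv.ne'
  have n13 : v ≠ w := hvw
  have n14 : v ≠ ax := haxv.ne'
  have n23 : x ≠ w := hxw.ne
  have n24 : x ≠ ax := haxne.symm
  have n34 : w ≠ ax := haxw.ne'
  have xax : ¬ G.Adj x ax := fun h => haxx h.symm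
  have wnadj : ¬ G.Adj w v := fun h => hnadj h.symm
  -- build the wheel: hub ay, cycle v - x - w - ax - v
  have f : wheel4 ↪g G := by
    refine ⟨⟨![ay, v, x, w, ax], ?_⟩, ?_⟩
    · intro i j h
      fin_cases i <;> fin_cases j <;>
        first
          | rfl
          | exact absurd h n01 | exact absurd h.symm n01
          | exact absurd h n02 | exact absurd h.symm n02
          | exact absurd h n03 | exact absurd h.symm n03
          | exact absurd h n04 | exact absurd h.symm n04
          | exact absurd h n12 | exact absurd h.symm n12
          | exact absurd h n13 | exact absurd h.symm n13
          | exact absurd h n14 | exact absurd h.symm n14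
          | exact absurd h n23 | exact absurd h.symm n23
          | exact absurd h n24 | exact absurd h.symm n24
          | exact absurd h n34 | exact absurd h.symm n34
    · intro i j
      fin_cases i <;> fin_cases j <;>
        first
          | exact iff_of_false G.irrefl (fun h => absurd ((wheel4_adj _ _).mp h) (by decide))
          | exact iff_of_false hnadj (fun h => absurd ((wheel4_adj _ _).mp h) (by decide))
          | exact iff_of_false wnadj (fun h => absurd ((wheel4_adj _ _).mp h) (by decide))
          | exact iff_of_false xax (fun h => absurd ((wheel4_adj _ _).mp h) (by decide))
          | exact iff_of_false haxx (fun h => absurd ((wheel4_adj _ _).mp h) (by decide))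
          | exact iff_of_true hayv ((wheel4_adj _ _).mpr (by decide))
          | exact iff_of_true hayx ((wheel4_adj _ _).mpr (by decide))
          | exact iff_of_true hayw ((wheel4_adj _ _).mpr (by decide))
          | exact iff_of_true haa.symm ((wheel4_adj _ _).mpr (by decide))
          | exact iff_of_true hayv.symm ((wheel4_adj _ _).mpr (by decide))
          | exact iff_of_true hayx.symm ((wheel4_adj _ _).mpr (by decide))
          | exact iff_of_true hayw.symm ((wheel4_adj _ _).mpr (by decide))
          | exact iff_of_true haa ((wheel4_adj _ _).mpr (by decide))
          | exact iff_of_true hxv ((wheel4_adj _ _).mpr (by decide))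
          | exact iff_of_true hxv.symm ((wheel4_adj _ _).mpr (by decide))
          | exact iff_of_true hxw ((wheel4_adj _ _).mpr (by decide))
          | exact iff_of_true hxw.symm ((wheel4_adj _ _).mpr (by decide))
          | exact iff_of_true haxv ((wheel4_adj _ _).mpr (by decide))
          | exact iff_of_true haxv.symm ((wheel4_adj _ _).mpr (by decide))
          | exact iff_of_true haxw ((wheel4_adj _ _).mpr (by decide))
          | exact iff_of_true haxw.symm ((wheel4_adj _ _).mpr (by decide))
  exact h4.false f
end

section
/- If G is a connected {3K₁, K₁+C₄}-free graph, then V(G) can be partitioned into at most 4 sets M₁, M₂, M₃, M₄, each inducing a complete subgraph, with |M₁| ≤ ω, |M₂| ≤ ω, |M₃| ≤ ω−1, and |M₄| ≤ ω−1, where ω is the clique number of G. -/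
open SimpleGraph

/-!
Fix a vertex `v`. By 3K₁-freeness the non-neighbours of `v` form a clique `M₁`. If the
neighbourhood `N(v)` is a clique, take `M₂ = N(v) ∪ {v}`. Otherwise choose non-adjacent
`x, y ∈ N(v)` and split `N(v)` into the non-neighbours of `x`, the remaining non-neighbours
of `y`, and the common neighbours of `x` and `y`. The first two parts are cliques by
3K₁-freeness; the third is one because two non-adjacent common neighbours `a, b` would span a
wheel with hub `v` and rim `x a y b`. Adding `v` to the first part gives `M₂`, and the other
two parts stay cliques after adding `v`, so each has at most `ω - 1` vertices.
-/

namespace SimpleGraph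

variable {V : Type*} {G : SimpleGraph V}

lemma IsClique.ncard_le_cliqueNum [Finite V] {s : Set V} (hs : G.IsClique s) :
    s.ncard ≤ G.cliqueNum := by
  obtain ⟨t, rfl⟩ := s.toFinite.exists_finset_coe
  rw [Set.ncard_coe_finset]
  exact hs.card_le_cliqueNum

lemma IsClique.ncard_le_cliqueNum_sub_one [Finite V] {s : Set V} {v : V} (hs : G.IsClique s)
    (hsv : s ⊆ G.neighborSet v) : s.ncard ≤ G.cliqueNum - 1 := by
  have hv : v ∉ s := fun h => G.irrefl (hsv h)
  have := (hs.insert fun b hb _ => hsv hb).ncard_le_cliqueNum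
  rw [Set.ncard_insert_of_notMem hv] at this
  omega

lemma isCompl_compl_neighborSet_insert (v : V) :
    IsCompl (Gᶜ.neighborSet v) (insert v (G.neighborSet v)) := by
  have h : Gᶜ.neighborSet v = (insert v (G.neighborSet v))ᶜ := by
    ext w
    simp [compl_adj, eq_comm]
  exact h ▸ isCompl_compl.symm

end SimpleGraph

section

variable {V : Type*} {G : SimpleGraph V}

lemma ThreeK1Free.isClique_compl_neighborSet (h3 : ThreeK1Free G) (x : V) :
    G.IsClique (Gᶜ.neighborSet x) := by
  intro a ha b hb hab
  simp only [mem_neighborSet, compl_adj] at ha hb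
  rcases h3 x a b ha.1 hb.1 hab with h | h | h
  exacts [(ha.2 h).elim, (hb.2 h).elim, h]

lemma K1C4Free.isClique_neighborSet_inter (h4 : K1C4Free G) {v x y : V} (hvx : G.Adj v x)
    (hvy : G.Adj v y) (hxy : x ≠ y) (hnxy : ¬ G.Adj x y) :
    G.IsClique (G.neighborSet v ∩ G.neighborSet x ∩ G.neighborSet y) := by
  rintro a ⟨⟨hva, hxa⟩, hya⟩ b ⟨⟨hvb, hxb⟩, hyb⟩ hab
  by_contra hnab
  simp only [mem_neighborSet] at *
  -- hub `v`, rim `x - a - y - b - x`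
  have hinj : Function.Injective ![v, x, a, y, b] := by
    have := G.ne_of_adj hvx; have := G.ne_of_adj hva; have := G.ne_of_adj hvy
    have := G.ne_of_adj hvb; have := G.ne_of_adj hxa; have := G.ne_of_adj hxb
    have := G.ne_of_adj hya; have := G.ne_of_adj hyb
    intro i j hij
    fin_cases i <;> fin_cases j <;> simp_all [eq_comm]
  refine h4.false ⟨⟨![v, x, a, y, b], hinj⟩, fun {i j} => ?_⟩
  fin_cases i <;> fin_cases j <;> simp_all [wheel4, G.adj_comm]

lemma exists_isClique_partition_neighborSet (h3 : ThreeK1Free G) (h4 : K1C4Free G) (v : V) :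
    ∃ A B C : Set V, A ∪ B ∪ C = G.neighborSet v ∧
      Disjoint A B ∧ Disjoint A C ∧ Disjoint B C ∧
      G.IsClique A ∧ G.IsClique B ∧ G.IsClique C := by
  by_cases hN : G.IsClique (G.neighborSet v)
  · exact ⟨_, ∅, ∅, by simp, by simp, by simp, by simp, hN, isClique_empty, isClique_empty⟩
  obtain ⟨x, hx, y, hy, hxy, hnxy⟩ :
      ∃ x ∈ G.neighborSet v, ∃ y ∈ G.neighborSet v, x ≠ y ∧ ¬ G.Adj x y := by
    simpa [IsClique, Set.Pairwise] using hN
  refine ⟨G.neighborSet v ∩ Gᶜ.neighborSet x,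
    G.neighborSet v ∩ Gᶜ.neighborSet y ∩ (Gᶜ.neighborSet x)ᶜ,
    G.neighborSet v ∩ G.neighborSet x ∩ G.neighborSet y, ?_, ?_, ?_, ?_,
    (h3.isClique_compl_neighborSet x).subset Set.inter_subset_right,
    (h3.isClique_compl_neighborSet y).subset (Set.inter_subset_left.trans Set.inter_subset_right),
    h4.isClique_neighborSet_inter hx hy hxy hnxy⟩
  · ext u
    simp only [Set.mem_union, Set.mem_inter_iff, Set.mem_compl_iff, mem_neighborSet, compl_adj]
    have := G.adj_comm x y
    by_cases hux : u = x <;> by_cases huy : u = y <;> subst_vars <;> tauto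
  all_goals
    rw [Set.disjoint_left]
    simp +contextual [compl_adj]

end

theorem stmt2_general {V : Type*} [Fintype V] (G : SimpleGraph V)
    (h3 : ThreeK1Free G) (h4 : K1C4Free G) :
    ∃ M₁ M₂ M₃ M₄ : Set V,
      M₁ ∪ M₂ ∪ M₃ ∪ M₄ = Set.univ ∧
      Disjoint M₁ M₂ ∧ Disjoint M₁ M₃ ∧ Disjoint M₁ M₄ ∧
      Disjoint M₂ M₃ ∧ Disjoint M₂ M₄ ∧ Disjoint M₃ M₄ ∧
      M₁.Pairwise G.Adj ∧ M₂.Pairwise G.Adj ∧ M₃.Pairwise G.Adj ∧ M₄.Pairwise G.Adj ∧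
      M₁.ncard ≤ G.cliqueNum ∧ M₂.ncard ≤ G.cliqueNum ∧
      M₃.ncard ≤ G.cliqueNum - 1 ∧ M₄.ncard ≤ G.cliqueNum - 1 := by
  rcases isEmpty_or_nonempty V with hV | ⟨⟨v⟩⟩
  · exact ⟨∅, ∅, ∅, ∅, by simp [Set.univ_eq_empty_iff.mpr hV], by simp⟩
  obtain ⟨A, B, C, hcover, hAB, hAC, hBC, hA, hB, hC⟩ :=
    exists_isClique_partition_neighborSet h3 h4 v
  have hAN : A ⊆ G.neighborSet v := hcover ▸ Set.subset_union_left.trans Set.subset_union_left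
  have hBN : B ⊆ G.neighborSet v := hcover ▸ Set.subset_union_right.trans Set.subset_union_left
  have hCN : C ⊆ G.neighborSet v := hcover ▸ Set.subset_union_right
  have hM₂ : G.IsClique (insert v A) := hA.insert fun b hb _ => hAN hb
  have hM₁ := h3.isClique_compl_neighborSet v
  have hcompl := G.isCompl_compl_neighborSet_insert v
  refine ⟨Gᶜ.neighborSet v, insert v A, B, C, ?_, ?_, ?_, ?_, ?_, ?_, hBC, hM₁, hM₂, hB, hC,
    hM₁.ncard_le_cliqueNum, hM₂.ncard_le_cliqueNum,
    hB.ncard_le_cliqueNum_sub_one hBN, hC.ncard_le_cliqueNum_sub_one hCN⟩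
  · calc _ = Gᶜ.neighborSet v ∪ insert v (A ∪ B ∪ C) := by
          simp only [Set.insert_union, Set.union_assoc]
      _ = Set.univ := hcover ▸ hcompl.sup_eq_top
  · exact hcompl.disjoint.mono_right (Set.insert_subset_insert hAN)
  · exact hcompl.disjoint.mono_right (hBN.trans (Set.subset_insert _ _))
  · exact hcompl.disjoint.mono_right (hCN.trans (Set.subset_insert _ _))
  · exact Set.disjoint_insert_left.mpr ⟨fun h => G.irrefl (hBN h), hAB⟩
  · exact Set.disjoint_insert_left.mpr ⟨fun h => G.irrefl (hCN h), hAC⟩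

theorem stmt2 {V : Type*} [Fintype V] (G : SimpleGraph V)
    (h3 : ThreeK1Free G) (h4 : K1C4Free G) (hconn : G.Connected) :
    ∃ M₁ M₂ M₃ M₄ : Set V,
      M₁ ∪ M₂ ∪ M₃ ∪ M₄ = Set.univ ∧
      Disjoint M₁ M₂ ∧ Disjoint M₁ M₃ ∧ Disjoint M₁ M₄ ∧
      Disjoint M₂ M₃ ∧ Disjoint M₂ M₄ ∧ Disjoint M₃ M₄ ∧
      M₁.Pairwise G.Adj ∧ M₂.Pairwise G.Adj ∧ M₃.Pairwise G.Adj ∧ M₄.Pairwise G.Adj ∧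
      M₁.ncard ≤ G.cliqueNum ∧ M₂.ncard ≤ G.cliqueNum ∧
      M₃.ncard ≤ G.cliqueNum - 1 ∧ M₄.ncard ≤ G.cliqueNum - 1 :=
  stmt2_general G h3 h4
end

section
/- Every {3K₁, K₁+C₄}-free graph G satisfies χ(G) ≤ 4·ω(G). (Weak corollary of the structure lemma: the vertex set is covered by at most 4 cliques.) -/
open SimpleGraph

section Aux

variable {V : Type*} [Fintype V] [DecidableEq V]

private noncomputable def rnk (s : Finset V) (u : V) : ℕ :=
  ((s.filter fun w => (Fintype.equivFin V) w < (Fintype.equivFin V) u)).card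

private lemma rnk_lt {s : Finset V} {u : V} (hu : u ∈ s) : rnk s u < s.card := by
  apply Finset.card_lt_card
  rw [Finset.filter_ssubset]
  exact ⟨u, hu, by simp⟩

private lemma rnk_inj {s : Finset V} {u w : V} (hu : u ∈ s) (hw : w ∈ s) (huw : u ≠ w) :
    rnk s u ≠ rnk s w := by
  have key : ∀ a b : V, a ∈ s → b ∈ s →
      (Fintype.equivFin V) a < (Fintype.equivFin V) b → rnk s a < rnk s b := by
    intro a b ha hb hab
    apply Finset.card_lt_card
    constructor
    · exact Finset.filter_subset_filter _ (fun x hx => hx) |>.trans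
        (by intro x hx; simp only [Finset.mem_filter] at *; exact ⟨hx.1, hx.2.trans hab⟩)
    · intro hsub
      have : a ∈ s.filter fun w => (Fintype.equivFin V) w < (Fintype.equivFin V) b := by
        simp [ha, hab]
      have := hsub this
      simp at this
  rcases lt_or_gt_of_ne (fun h : (Fintype.equivFin V) u = (Fintype.equivFin V) w =>
      huw ((Fintype.equivFin V).injective h)) with h | h
  · exact (key u w hu hw h).ne
  · exact (key w u hw hu h).ne'

private lemma cover_colorable (G : SimpleGraph V) (h3 : ThreeK1Free G) (v : V)
    (A B R : Finset V)
    (hA : G.IsClique (A : Set V)) (hB : G.IsClique (B : Set V)) (hR : G.IsClique (R : Set V))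
    (hcov : ∀ u, G.Adj v u → u ∉ A → u ∉ B → u ∈ R) :
    G.Colorable (4 * G.cliqueNum) := by
  classical
  set ω := G.cliqueNum with hω
  have hω1 : 1 ≤ ω := by
    have h1 : ({v} : Finset V).card ≤ ω :=
      IsClique.card_le_cliqueNum (tc := by simp [SimpleGraph.isClique_singleton])
    simpa using h1
  set M : Finset V := Finset.univ.filter (fun u => u ≠ v ∧ ¬ G.Adj v u) with hMdef
  have hMclique : G.IsClique (M : Set V) := by
    intro a ha b hb hab
    simp only [hMdef, Finset.coe_filter, Set.mem_setOf_eq, Finset.mem_univ, true_and] at ha hb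
    rcases h3 v a b (Ne.symm ha.1) (Ne.symm hb.1) hab with h | h | h
    · exact absurd h ha.2
    · exact absurd h hb.2
    · exact h
  have hMcard : M.card ≤ ω := IsClique.card_le_cliqueNum (tc := hMclique)
  have hAcard : A.card ≤ ω := IsClique.card_le_cliqueNum (tc := hA)
  have hBcard : B.card ≤ ω := IsClique.card_le_cliqueNum (tc := hB)
  have hRcard : R.card ≤ ω := IsClique.card_le_cliqueNum (tc := hR)
  set C : V → ℕ := fun u =>
    if ¬ G.Adj v u then (if u = v then 0 else rnk M u)
    else if u ∈ A then ω + rnk A u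
    else if u ∈ B then 2*ω + rnk B u
    else 3*ω + rnk R u with hCdef
  have spec : ∀ z : V,
      (¬ G.Adj v z ∧ z = v ∧ C z = 0 ∧ 0 < ω) ∨
      (¬ G.Adj v z ∧ z ∈ M ∧ C z = rnk M z ∧ rnk M z < ω) ∨
      (G.Adj v z ∧ z ∈ A ∧ C z = ω + rnk A z ∧ rnk A z < ω) ∨
      (G.Adj v z ∧ z ∈ B ∧ C z = 2*ω + rnk B z ∧ rnk B z < ω) ∨
      (G.Adj v z ∧ z ∈ R ∧ C z = 3*ω + rnk R z ∧ rnk R z < ω) := by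
    intro z
    by_cases h1 : G.Adj v z
    · by_cases h2 : z ∈ A
      · refine Or.inr (Or.inr (Or.inl ⟨h1, h2, ?_, (rnk_lt h2).trans_le hAcard⟩))
        simp only [hCdef]
        rw [if_neg (not_not_intro h1), if_pos h2]
      · by_cases h3' : z ∈ B
        · refine Or.inr (Or.inr (Or.inr (Or.inl ⟨h1, h3', ?_, (rnk_lt h3').trans_le hBcard⟩)))
          simp only [hCdef]
          rw [if_neg (not_not_intro h1), if_neg h2, if_pos h3']
        · have hz := hcov z h1 h2 h3'
          refine Or.inr (Or.inr (Or.inr (Or.inr ⟨h1, hz, ?_, (rnk_lt hz).trans_le hRcard⟩)))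
          simp only [hCdef]
          rw [if_neg (not_not_intro h1), if_neg h2, if_neg h3']
    · by_cases h2 : z = v
      · refine Or.inl ⟨h1, h2, ?_, hω1⟩
        simp only [hCdef]
        rw [if_pos h1, if_pos h2]
      · have hz : z ∈ M := by simp [hMdef, h2, h1]
        refine Or.inr (Or.inl ⟨h1, hz, ?_, (rnk_lt hz).trans_le hMcard⟩)
        simp only [hCdef]
        rw [if_pos h1, if_neg h2]
  have hbounds : ∀ u : V, C u < 4 * ω := by
    intro u
    rcases spec u with ⟨_, _, hcu, hbu⟩ | ⟨_, _, hcu, hbu⟩ | ⟨_, _, hcu, hbu⟩ |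
      ⟨_, _, hcu, hbu⟩ | ⟨_, _, hcu, hbu⟩ <;> omega
  have hproper : ∀ u w : V, G.Adj u w → C u = C w → False := by
    intro u w hadj hc
    have huw : u ≠ w := hadj.ne
    rcases spec u with ⟨hnu, huM, hcu, hbu⟩ | ⟨hnu, huM, hcu, hbu⟩ | ⟨hnu, huM, hcu, hbu⟩ |
        ⟨hnu, huM, hcu, hbu⟩ | ⟨hnu, huM, hcu, hbu⟩ <;>
      rcases spec w with ⟨hnw, hwM, hcw, hbw⟩ | ⟨hnw, hwM, hcw, hbw⟩ | ⟨hnw, hwM, hcw, hbw⟩ |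
        ⟨hnw, hwM, hcw, hbw⟩ | ⟨hnw, hwM, hcw, hbw⟩ <;>
      first
        | omega
        | exact huw (huM.trans hwM.symm)
        | (rw [huM] at hadj; exact hnw hadj)
        | (rw [hwM] at hadj; exact hnu hadj.symm)
        | exact rnk_inj huM hwM huw (by omega)
  rw [SimpleGraph.colorable_iff_exists_bdd_nat_coloring]
  exact ⟨SimpleGraph.Coloring.mk C (fun {a b} hab hc => hproper a b hab hc), hbounds⟩

end Aux

theorem stmt3 {V : Type*} [Fintype V] (G : SimpleGraph V)
    (h3 : ThreeK1Free G) (h4 : K1C4Free G) :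
    G.chromaticNumber ≤ ((4 * G.cliqueNum : ℕ) : ℕ∞) := by
  classical
  rcases isEmpty_or_nonempty V with hV | hV
  · refine Colorable.chromaticNumber_le ?_
    exact ⟨⟨fun u => isEmptyElim u, fun {a} => isEmptyElim a⟩⟩
  refine Colorable.chromaticNumber_le ?_
  obtain ⟨v⟩ := hV
  set N : Finset V := Finset.univ.filter (fun u => G.Adj v u) with hNdef
  by_cases hedge : ∃ x ∈ N, ∃ y ∈ N, x ≠ y ∧ ¬ G.Adj x y
  · obtain ⟨x, hx, y, hy, hxy, hnxy⟩ := hedge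
    simp only [hNdef, Finset.mem_filter, Finset.mem_univ, true_and] at hx hy
    set A : Finset V := Finset.univ.filter (fun u => G.Adj v u ∧ u ≠ x ∧ ¬ G.Adj x u) with hAdef
    set B : Finset V := Finset.univ.filter (fun u => G.Adj v u ∧ u ≠ y ∧ ¬ G.Adj y u) with hBdef
    set R : Finset V := Finset.univ.filter (fun u => G.Adj v u ∧ G.Adj x u ∧ G.Adj y u) with hRdef
    apply cover_colorable G h3 v A B R
    · intro a ha b hb hab
      simp only [hAdef, Finset.coe_filter, Set.mem_setOf_eq, Finset.mem_univ, true_and] at ha hb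
      rcases h3 x a b (Ne.symm ha.2.1) (Ne.symm hb.2.1) hab with h | h | h
      · exact absurd h ha.2.2
      · exact absurd h hb.2.2
      · exact h
    · intro a ha b hb hab
      simp only [hBdef, Finset.coe_filter, Set.mem_setOf_eq, Finset.mem_univ, true_and] at ha hb
      rcases h3 y a b (Ne.symm ha.2.1) (Ne.symm hb.2.1) hab with h | h | h
      · exact absurd h ha.2.2
      · exact absurd h hb.2.2
      · exact h
    · -- R is a clique, via the wheel
      intro a ha b hb hab
      simp only [hRdef, Finset.coe_filter, Set.mem_setOf_eq, Finset.mem_univ, true_and] at ha hb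
      by_contra hnab
      obtain ⟨hva, hxa, hya⟩ := ha
      obtain ⟨hvb, hxb, hyb⟩ := hb
      have hvx : G.Adj v x := hx
      have hvy : G.Adj v y := hy
      -- distinctness
      have dxa : x ≠ a := fun h => G.irrefl (h ▸ hxa)
      have dxb : x ≠ b := fun h => G.irrefl (h ▸ hxb)
      have dya : y ≠ a := fun h => G.irrefl (h ▸ hya)
      have dyb : y ≠ b := fun h => G.irrefl (h ▸ hyb)
      have dvx : v ≠ x := G.ne_of_adj hvx
      have dvy : v ≠ y := G.ne_of_adj hvy
      have dva : v ≠ a := G.ne_of_adj hva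
      have dvb : v ≠ b := G.ne_of_adj hvb
      refine h4.false ⟨⟨![v, x, a, y, b], ?_⟩, ?_⟩
      · intro i j hij
        fin_cases i <;> fin_cases j <;>
          simp_all [Matrix.cons_val_zero, Matrix.cons_val_one] <;> tauto
      · intro i j
        fin_cases i <;> fin_cases j <;>
          simp [wheel4, Matrix.cons_val_zero, Matrix.cons_val_one, SimpleGraph.fromRel_adj] <;>
          first
            | exact G.irrefl
            | (constructor <;> intro hh <;> simp_all [G.adj_comm] <;> tauto)
            | tauto
    · -- coverage
      intro u hu huA huB
      have hmemA : ∀ z, z ∈ A ↔ (G.Adj v z ∧ z ≠ x ∧ ¬ G.Adj x z) := by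
        intro z; simp [hAdef]
      have hmemB : ∀ z, z ∈ B ↔ (G.Adj v z ∧ z ≠ y ∧ ¬ G.Adj y z) := by
        intro z; simp [hBdef]
      have hxu : G.Adj x u := by
        by_cases hne : u = x
        · exact absurd ((hmemB u).mpr ⟨hu, by rw [hne]; exact hxy,
            by rw [hne]; exact fun hc => hnxy hc.symm⟩) huB
        · by_contra hc
          exact huA ((hmemA u).mpr ⟨hu, hne, hc⟩)
      have hyu : G.Adj y u := by
        by_cases hne : u = y
        · exact absurd ((hmemA u).mpr ⟨hu, by rw [hne]; exact Ne.symm hxy,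
            by rw [hne]; exact hnxy⟩) huA
        · by_contra hc
          exact huB ((hmemB u).mpr ⟨hu, hne, hc⟩)
      simp only [hRdef, Finset.mem_filter, Finset.mem_univ, true_and]
      exact ⟨hu, hxu, hyu⟩
  · -- N itself is a clique
    push_neg at hedge
    apply cover_colorable G h3 v N ∅ ∅
    · intro a ha b hb hab
      simp only [hNdef, Finset.coe_filter, Set.mem_setOf_eq, Finset.mem_univ, true_and] at ha hb
      exact hedge a (by simp [hNdef, ha]) b (by simp [hNdef, hb]) hab
    · simp [SimpleGraph.isClique_empty]
    · simp [SimpleGraph.isClique_empty]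
    · intro u hu hnu _
      exact absurd (by simp [hNdef, hu]) hnu
end

section
/- Every 3K₁-free graph G satisfies χ(G) ≤ ⌈(Δ(G) + ω(G) + 1)/2⌉, where Δ is the maximum degree. (Reed-type bound which holds for graphs with independence number at most 2.) -/
set_option linter.unusedSectionVars false
set_option linter.unusedVariables false
set_option maxHeartbeats 1000000
open Finset
namespace S9
universe u
variable {V : Type u} [Fintype V] [DecidableEq V]

structure IsM (H : SimpleGraph V) (p : V → V) : Prop where
  invol : ∀ x, p (p x) = x
  adj : ∀ x, p x ≠ x → H.Adj x (p x)

def fixes (p : V → V) : Finset V := Finset.univ.filter (fun x => p x = x)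

lemma mem_fixes {p : V → V} {x : V} : x ∈ fixes p ↔ p x = x := by simp [fixes]

noncomputable def mfix (H : SimpleGraph V) : ℕ :=
  sInf {k | ∃ p, IsM H p ∧ (fixes p).card = k}

lemma isM_id (H : SimpleGraph V) : IsM H (id : V → V) := ⟨fun _ => rfl, fun x h => absurd rfl h⟩

lemma mfix_set_nonempty (H : SimpleGraph V) :
    {k | ∃ p, IsM H p ∧ (fixes p).card = k}.Nonempty :=
  ⟨(fixes (id : V → V)).card, ⟨id, isM_id H, rfl⟩⟩

lemma mfix_exists (H : SimpleGraph V) : ∃ p, IsM H p ∧ (fixes p).card = mfix H :=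
  Nat.sInf_mem (mfix_set_nonempty H)

lemma mfix_le {H : SimpleGraph V} {p : V → V} (hp : IsM H p) : mfix H ≤ (fixes p).card :=
  Nat.sInf_le ⟨p, hp, rfl⟩

lemma even_card_nonfixes {p : V → V} (hp : ∀ x, p (p x) = x) :
    Even (Finset.univ.filter (fun x => ¬ p x = x)).card := by
  set s := Finset.univ.filter (fun x => ¬ p x = x) with hs
  have hclosed : ∀ x ∈ s, p x ∈ s := by
    intro x hx
    simp only [hs, mem_filter, mem_univ, true_and] at hx ⊢
    rw [hp x]
    intro h; exact hx h.symm
  have hnf : ∀ x ∈ s, ¬ p x = x := by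
    intro x hx; simpa [hs, mem_filter] using hx
  clear_value s
  clear hs
  generalize hn : s.card = n
  induction n using Nat.strong_induction_on generalizing s with
  | _ n IH =>
    rcases Finset.eq_empty_or_nonempty s with rfl | ⟨x, hx⟩
    · simp at hn; simp [← hn]
    · have hpx : p x ∈ s := hclosed x hx
      have hxpx : p x ≠ x := hnf x hx
      set t := (s.erase x).erase (p x) with ht
      have hmempx : p x ∈ s.erase x := mem_erase.2 ⟨hxpx, hpx⟩
      have htcard : t.card = n - 2 := by
        rw [ht, card_erase_of_mem hmempx, card_erase_of_mem hx, hn]; omega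
      have hn2 : 2 ≤ n := by
        rw [← hn]
        have : {p x, x} ⊆ s := by
          intro z hz; rcases mem_insert.1 hz with rfl | hz
          · exact hpx
          · rwa [mem_singleton.1 hz]
        calc 2 = ({p x, x} : Finset V).card := by
              rw [card_insert_of_notMem (by simp [hxpx]), card_singleton]
        _ ≤ s.card := card_le_card this
      have htc : ∀ y ∈ t, p y ∈ t := by
        intro y hy
        have hys : y ∈ s := mem_of_mem_erase (mem_of_mem_erase hy)
        have h1 : y ≠ x := (mem_erase.1 (mem_of_mem_erase hy)).1
        have h2 : y ≠ p x := (mem_erase.1 hy).1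
        refine mem_erase.2 ⟨?_, mem_erase.2 ⟨?_, hclosed y hys⟩⟩
        · intro h; exact h1 (by rw [← hp y, h, hp x])
        · intro h; exact h2 (by rw [← hp y, h])
      have := IH (n - 2) (by omega) t htc (fun y hy => hnf y (mem_of_mem_erase (mem_of_mem_erase hy))) htcard
      rcases this with ⟨m, hm⟩
      exact ⟨m + 1, by omega⟩

lemma fixes_card_parity {p : V → V} (hp : ∀ x, p (p x) = x) :
    ∃ a, Fintype.card V = (fixes p).card + 2 * a := by
  obtain ⟨a, ha⟩ := even_card_nonfixes hp
  have hsplit : (fixes p).card + (univ.filter (fun x => ¬ p x = x)).card = Fintype.card V := by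
    rw [fixes, ← Finset.card_univ,
      ← Finset.card_filter_add_card_filter_not (s := (univ : Finset V))
        (p := fun x => p x = x)]
  exact ⟨a, by omega⟩

lemma fixes_not_adj {H : SimpleGraph V} {p : V → V} (hp : IsM H p)
    (hmin : ∀ q, IsM H q → (fixes p).card ≤ (fixes q).card)
    {x y : V} (hx : p x = x) (hy : p y = y) (hxy : x ≠ y) (hadj : H.Adj x y) : False := by
  classical
  set q : V → V := fun z => if z = x then y else if z = y then x else p z with hqdef
  have hqx : q x = y := by simp [hqdef]
  have hqy : q y = x := by simp [hqdef, hxy.symm]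
  have hqz : ∀ z, z ≠ x → z ≠ y → q z = p z := by
    intro z h1 h2; simp [hqdef, h1, h2]
  have hpz_ne : ∀ z, z ≠ x → z ≠ y → (p z ≠ x ∧ p z ≠ y) := by
    intro z h1 h2
    constructor
    · intro h; apply h1; rw [← hp.invol z, h, hx]
    · intro h; apply h2; rw [← hp.invol z, h, hy]
  have hq : IsM H q := by
    constructor
    · intro z
      by_cases h1 : z = x
      · subst h1; rw [hqx, hqy]
      · by_cases h2 : z = y
        · subst h2; rw [hqy, hqx]
        · obtain ⟨e1, e2⟩ := hpz_ne z h1 h2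
          rw [hqz z h1 h2, hqz _ e1 e2, hp.invol]
    · intro z hz
      by_cases h1 : z = x
      · subst h1; rw [hqx]; exact hadj
      · by_cases h2 : z = y
        · subst h2; rw [hqy]; exact hadj.symm
        · rw [hqz z h1 h2] at hz ⊢; exact hp.adj z hz
  have hfq : fixes q = ((fixes p).erase x).erase y := by
    ext z
    by_cases h1 : z = x
    · rw [mem_fixes, h1, hqx, mem_erase, mem_erase]
      constructor
      · intro h; exact absurd h hxy.symm
      · rintro ⟨-, h, -⟩; exact absurd rfl h
    · by_cases h2 : z = y
      · rw [mem_fixes, h2, hqy, mem_erase, mem_erase]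
        constructor
        · intro h; exact absurd h hxy
        · rintro ⟨h, -, -⟩; exact absurd rfl h
      · simp only [mem_fixes, mem_erase, hqz z h1 h2]
        tauto
  have hcard : (fixes q).card = (fixes p).card - 2 := by
    rw [hfq]
    have hyx : y ∈ (fixes p).erase x := mem_erase.2 ⟨hxy.symm, mem_fixes.2 hy⟩
    rw [card_erase_of_mem hyx, card_erase_of_mem (mem_fixes.2 hx)]; omega
  have h2 : 2 ≤ (fixes p).card := by
    have : {y, x} ⊆ fixes p := by
      intro z hz; rcases mem_insert.1 hz with rfl | hz
      · exact mem_fixes.2 hy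
      · rw [mem_singleton.1 hz]; exact mem_fixes.2 hx
    calc 2 = ({y, x} : Finset V).card := by
            rw [card_insert_of_notMem (by simp [hxy.symm]), card_singleton]
    _ ≤ _ := card_le_card this
  have := hmin q hq
  omega

def flipf (S : Finset V) (f g : V → V) : V → V := fun x => if x ∈ S then g x else f x

lemma flipf_mem {S : Finset V} {f g : V → V} {x : V} (h : x ∈ S) : flipf S f g x = g x :=
  if_pos h

lemma flipf_notMem {S : Finset V} {f g : V → V} {x : V} (h : x ∉ S) : flipf S f g x = f x :=
  if_neg h

lemma flipf_isM {H : SimpleGraph V} {f g : V → V} (hf : IsM H f) (hg : IsM H g)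
    {S : Finset V} (hfS : ∀ x ∈ S, f x ∈ S) (hgS : ∀ x ∈ S, g x ∈ S) :
    IsM H (flipf S f g) := by
  constructor
  · intro x
    by_cases h : x ∈ S
    · rw [flipf_mem h, flipf_mem (hgS x h), hg.invol]
    · have : f x ∉ S := fun hc => h (by rw [← hf.invol x]; exact hfS _ hc)
      rw [flipf_notMem h, flipf_notMem this, hf.invol]
  · intro x hx
    by_cases h : x ∈ S
    · rw [flipf_mem h] at hx ⊢; exact hg.adj x hx
    · rw [flipf_notMem h] at hx ⊢; exact hf.adj x hx

lemma flipf_fixes {f g : V → V} (S : Finset V) :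
    fixes (flipf S f g) = (fixes f \ S) ∪ (fixes g ∩ S) := by
  ext x
  by_cases h : x ∈ S <;>
    simp [mem_fixes, flipf, h]

lemma flipf_fixes_card {f g : V → V} (S : Finset V) :
    (fixes (flipf S f g)).card = (fixes f).card - (fixes f ∩ S).card + (fixes g ∩ S).card := by
  rw [flipf_fixes]
  rw [card_union_of_disjoint]
  · congr 1
    have := Finset.card_inter_add_card_sdiff (fixes f) S
    omega
  · intro t ht1 ht2
    intro x hx
    have h1 := ht1 hx
    have h2 := ht2 hx
    simp only [mem_sdiff, mem_inter] at h1 h2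
    exact absurd h2.2 h1.2

section Walk

variable (q r : V → V)

def nx (k : ℕ) (x : V) : V := if k % 2 = 0 then r x else q x

def wk (u : V) : ℕ → V
  | 0 => u
  | k+1 => nx q r k (wk u k)

lemma wk_succ (u : V) (k : ℕ) : wk q r u (k+1) = nx q r k (wk q r u k) := rfl

lemma nx_even {k : ℕ} (h : k % 2 = 0) (x : V) : nx q r k x = r x := if_pos h

lemma nx_odd {k : ℕ} (h : k % 2 = 1) (x : V) : nx q r k x = q x := by
  unfold nx; rw [if_neg (by omega)]

variable {q r}
variable (hq : ∀ x, q (q x) = x) (hr : ∀ x, r (r x) = x)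

include hq hr

lemma nx_invol (k : ℕ) (x : V) : nx q r k (nx q r k x) = x := by
  unfold nx; split
  · exact hr x
  · exact hq x

lemma nx_congr {i j : ℕ} (h : i % 2 = j % 2) (x : V) : nx q r i x = nx q r j x := by
  unfold nx; rw [h]

lemma wk_pred (u : V) (k : ℕ) : nx q r k (wk q r u (k+1)) = wk q r u k := by
  rw [wk_succ, nx_invol hq hr]

variable {u : V} (hu : q u = u) (hru : r u ≠ u)
include hu hru

lemma noLoop :
    ∀ j, (∀ k, k < j → wk q r u (k+1) ≠ wk q r u k) →
      ∀ i, i < j → wk q r u i ≠ wk q r u j := by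
  intro j
  induction j using Nat.strong_induction_on with
  | _ j IH =>
  intro hsf i hij heq
  rcases Nat.eq_zero_or_pos i with rfl | hi
  · rcases Nat.lt_or_ge j 2 with hj2 | hj2
    · interval_cases j
      exact hsf 0 (by omega) heq.symm
    · have hpred : nx q r (j-1) (wk q r u j) = wk q r u (j-1) := by
        have h1 := wk_pred hq hr (u := u) (j-1)
        rwa [show j - 1 + 1 = j by omega] at h1
      rcases Nat.mod_two_eq_zero_or_one j with hje | hjo
      · have hj1 : (j-1) % 2 = 1 := by omega
        have h2 : wk q r u (j-1) = wk q r u 0 := by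
          rw [← hpred, ← heq, nx_odd q r hj1]
          exact hu
        exact IH (j-1) (by omega) (fun k hk => hsf k (by omega)) 0 (by omega) h2.symm
      · have hj3 : 3 ≤ j := by omega
        have hj1 : (j-1) % 2 = 0 := by omega
        have h2 : wk q r u (j-1) = wk q r u 1 := by
          rw [← hpred, ← heq, nx_even q r hj1]
          rfl
        exact IH (j-1) (by omega) (fun k hk => hsf k (by omega)) 1 (by omega) h2.symm
  · by_cases hpar : i % 2 = j % 2
    · have hij2 : i + 2 ≤ j := by omega
      have e1 : wk q r u (i-1) = wk q r u (j-1) := by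
        have a1 := wk_pred hq hr (u := u) (i-1)
        have a2 := wk_pred hq hr (u := u) (j-1)
        rw [show i - 1 + 1 = i by omega] at a1
        rw [show j - 1 + 1 = j by omega] at a2
        rw [← a1, ← a2, heq, nx_congr hq hr (show (i-1) % 2 = (j-1) % 2 by omega)]
      exact IH (j-1) (by omega) (fun k hk => hsf k (by omega)) (i-1) (by omega) e1
    · have e1 : wk q r u (i+1) = wk q r u (j-1) := by
        have a2 := wk_pred hq hr (u := u) (j-1)
        rw [show j - 1 + 1 = j by omega] at a2
        rw [wk_succ, ← a2, heq, nx_congr hq hr (show i % 2 = (j-1) % 2 by omega)]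
      rcases Nat.lt_or_ge (i+1) j with hlt | hge
      · have hne : i + 1 < j - 1 := by omega
        exact IH (j-1) (by omega) (fun k hk => hsf k (by omega)) (i+1) hne e1
      · have : i + 1 = j := by omega
        rw [this] at e1
        exact hsf (j-1) (by omega) (by rw [show j - 1 + 1 = j by omega]; exact e1)

lemma stall_exists : ∃ m, wk q r u (m+1) = wk q r u m := by
  by_contra hcon
  push_neg at hcon
  obtain ⟨i, j, hne, heq⟩ := Finite.exists_ne_map_eq_of_infinite (fun k : ℕ => wk q r u k)
  rcases lt_trichotomy i j with h | h | h
  · exact noLoop hq hr hu hru j (fun k _ => hcon k) i h heq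
  · exact hne h
  · exact noLoop hq hr hu hru i (fun k _ => hcon k) j h heq.symm

end Walk

/-- Main walk analysis: starting from a `q`-exposed, `r`-covered vertex `u`, where `q` is a
minimum matching, the alternating walk stalls after an even number of steps at an `r`-exposed
vertex, and flipping `r` along the walk gives a minimum-size-preserving matching exposing `u`. -/
lemma walk_R {H : SimpleGraph V} {q r : V → V} (hq : IsM H q) (hr : IsM H r)
    (hqmin : ∀ p, IsM H p → (fixes q).card ≤ (fixes p).card)
    {u : V} (hu : q u = u) (hru : r u ≠ u) :
    ∃ m, (m % 2 = 0 ∧ 1 ≤ m) ∧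
      (∀ i j, i < j → j ≤ m → wk q r u i ≠ wk q r u j) ∧
      (∀ k, k ≤ m → r (wk q r u k) = wk q r u k → k = m) ∧
      (∀ k, k ≤ m → q (wk q r u k) = wk q r u k → k = 0) ∧
      r (wk q r u m) = wk q r u m ∧
      (∃ r', IsM H r' ∧ (fixes r').card = (fixes r).card ∧ r' u = u ∧
        ∀ x, (∀ k, k ≤ m → x ≠ wk q r u k) → r' x = r x) := by
  classical
  have hqi := hq.invol
  have hri := hr.invol
  have hex := stall_exists hqi hri hu hru
  set m := Nat.find hex with hmdef
  have hstall : wk q r u (m+1) = wk q r u m := Nat.find_spec hex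
  have hsf : ∀ k, k < m → wk q r u (k+1) ≠ wk q r u k := fun k hk => Nat.find_min hex hk
  have hm1 : 1 ≤ m := by
    by_contra hcon
    have h0 : m = 0 := by omega
    rw [h0] at hstall
    have h1 : wk q r u (0+1) = r u := by rw [wk_succ, nx_even q r rfl]; rfl
    rw [h1] at hstall
    exact hru hstall
  have hinj : ∀ i j, i < j → j ≤ m → wk q r u i ≠ wk q r u j := by
    intro i j hij hjm
    exact noLoop hqi hri hu hru j (fun k hk => hsf k (by omega)) i hij
  -- predecessor identities
  have hpredE : ∀ k, k % 2 = 0 → r (wk q r u (k+1)) = wk q r u k := by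
    intro k hk
    have := wk_pred hqi hri (u := u) k
    rwa [nx_even q r hk] at this
  have hpredO : ∀ k, k % 2 = 1 → q (wk q r u (k+1)) = wk q r u k := by
    intro k hk
    have := wk_pred hqi hri (u := u) k
    rwa [nx_odd q r hk] at this
  have hstepE : ∀ k, k % 2 = 0 → wk q r u (k+1) = r (wk q r u k) := by
    intro k hk; rw [wk_succ, nx_even q r hk]
  have hstepO : ∀ k, k % 2 = 1 → wk q r u (k+1) = q (wk q r u k) := by
    intro k hk; rw [wk_succ, nx_odd q r hk]
  -- r-fixed vertices on walk
  have hrfix : ∀ k, k ≤ m → r (wk q r u k) = wk q r u k → k = m ∧ m % 2 = 0 := by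
    intro k hk hfix
    rcases Nat.mod_two_eq_zero_or_one k with hke | hko
    · have e := hstepE k hke
      rw [hfix] at e
      rcases Nat.lt_or_ge k m with hlt | hge
      · exact absurd e (hsf k hlt)
      · have : k = m := by omega
        exact ⟨this, by omega⟩
    · exfalso
      have e := hpredE (k-1) (by omega)
      rw [show k - 1 + 1 = k by omega] at e
      rw [hfix] at e
      exact hsf (k-1) (by omega) (by rw [show k - 1 + 1 = k by omega]; exact e.symm ▸ e)
  -- q-fixed vertices on walk
  have hqfix : ∀ k, k ≤ m → q (wk q r u k) = wk q r u k → k = 0 ∨ (k = m ∧ m % 2 = 1) := by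
    intro k hk hfix
    rcases Nat.eq_zero_or_pos k with rfl | hk1
    · exact Or.inl rfl
    rcases Nat.mod_two_eq_zero_or_one k with hke | hko
    · exfalso
      have e := hpredO (k-1) (by omega)
      rw [show k - 1 + 1 = k by omega] at e
      rw [hfix] at e
      exact hsf (k-1) (by omega) (by rw [show k - 1 + 1 = k by omega]; exact e)
    · have e := hstepO k hko
      rw [hfix] at e
      rcases Nat.lt_or_ge k m with hlt | hge
      · exact absurd e (hsf k hlt)
      · exact Or.inr ⟨by omega, by omega⟩
  -- the vertex set of the walk
  set S : Finset V := (range (m+1)).image (wk q r u) with hSdef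
  have memS : ∀ k, k ≤ m → wk q r u k ∈ S := by
    intro k hk
    exact mem_image.2 ⟨k, mem_range.2 (by omega), rfl⟩
  have memS_iff : ∀ x, x ∈ S ↔ ∃ k, k ≤ m ∧ wk q r u k = x := by
    intro x
    simp only [hSdef, mem_image, mem_range]
    constructor
    · rintro ⟨k, hk, rfl⟩; exact ⟨k, by omega, rfl⟩
    · rintro ⟨k, hk, rfl⟩; exact ⟨k, by omega, rfl⟩
  -- closure of S under q and r
  have hqS : ∀ x ∈ S, q x ∈ S := by
    intro x hx
    obtain ⟨k, hk, rfl⟩ := (memS_iff x).1 hx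
    rcases Nat.eq_zero_or_pos k with rfl | hk1
    · rw [show wk q r u 0 = u from rfl, hu]; exact memS 0 (by omega)
    rcases Nat.mod_two_eq_zero_or_one k with hke | hko
    · have e := hpredO (k-1) (by omega)
      rw [show k - 1 + 1 = k by omega] at e
      rw [e]; exact memS (k-1) (by omega)
    · have e := hstepO k hko
      rcases Nat.lt_or_ge k m with hlt | hge
      · rw [← e]; exact memS (k+1) (by omega)
      · have hkm : k = m := by omega
        rw [← e, hkm, hstall]; exact memS m le_rfl
  have hrS : ∀ x ∈ S, r x ∈ S := by
    intro x hx
    obtain ⟨k, hk, rfl⟩ := (memS_iff x).1 hx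
    rcases Nat.mod_two_eq_zero_or_one k with hke | hko
    · have e := hstepE k hke
      rcases Nat.lt_or_ge k m with hlt | hge
      · rw [← e]; exact memS (k+1) (by omega)
      · have hkm : k = m := by omega
        rw [← e, hkm, hstall]; exact memS m le_rfl
    · have e := hpredE (k-1) (by omega)
      rw [show k - 1 + 1 = k by omega] at e
      rw [e]; exact memS (k-1) (by omega)
  have huS : u ∈ S := memS 0 (by omega)
  -- m is even: otherwise flipping q along the walk decreases the number of exposed vertices
  have hmeven : m % 2 = 0 := by
    by_contra hodd
    have hmo : m % 2 = 1 := by omega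
    set q' := flipf S q r with hq'def
    have hq' : IsM H q' := flipf_isM hq hr hqS hrS
    have hrS0 : fixes r ∩ S = ∅ := by
      rw [eq_empty_iff_forall_notMem]
      intro x hx
      rw [mem_inter, mem_fixes] at hx
      obtain ⟨k, hk, rfl⟩ := (memS_iff x).1 hx.2
      obtain ⟨-, he⟩ := hrfix k hk hx.1
      omega
    have hwm_qfix : q (wk q r u m) = wk q r u m := by
      have e := hstepO m hmo
      rw [hstall] at e
      exact e.symm
    have hpair : {u, wk q r u m} ⊆ fixes q ∩ S := by
      intro z hz
      rcases mem_insert.1 hz with rfl | hz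
      · exact mem_inter.2 ⟨mem_fixes.2 hu, huS⟩
      · rw [mem_singleton.1 hz]
        exact mem_inter.2 ⟨mem_fixes.2 hwm_qfix, memS m le_rfl⟩
    have hune : u ≠ wk q r u m := hinj 0 m (by omega) le_rfl
    have hp2 : 2 ≤ (fixes q ∩ S).card := by
      calc 2 = ({u, wk q r u m} : Finset V).card := by
            rw [card_insert_of_notMem (by simp [hune]), card_singleton]
      _ ≤ _ := card_le_card hpair
    have hple : (fixes q ∩ S).card ≤ (fixes q).card := card_le_card inter_subset_left
    have hcard := flipf_fixes_card (f := q) (g := r) S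
    rw [← hq'def, hrS0] at hcard
    have := hqmin q' hq'
    simp at hcard
    omega
  -- flip r along the walk
  refine ⟨m, ⟨hmeven, hm1⟩, hinj, ?_, ?_, ?_, ?_⟩
  · intro k hk hfix
    exact (hrfix k hk hfix).1
  · intro k hk hfix
    rcases hqfix k hk hfix with h | ⟨-, h⟩
    · exact h
    · omega
  · have e := hstepE m hmeven
    rw [hstall] at e
    exact e.symm
  · set r' := flipf S r q with hr'def
    have hr' : IsM H r' := flipf_isM hr hq hrS hqS
    have hwm_rfix : r (wk q r u m) = wk q r u m := by
      have e := hstepE m hmeven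
      rw [hstall] at e
      exact e.symm
    have hqS1 : fixes q ∩ S = {u} := by
      ext x
      rw [mem_inter, mem_fixes, mem_singleton]
      constructor
      · rintro ⟨h1, h2⟩
        obtain ⟨k, hk, rfl⟩ := (memS_iff x).1 h2
        rcases hqfix k hk h1 with rfl | ⟨-, h⟩
        · rfl
        · omega
      · rintro rfl; exact ⟨hu, huS⟩
    have hrS1 : fixes r ∩ S = {wk q r u m} := by
      ext x
      rw [mem_inter, mem_fixes, mem_singleton]
      constructor
      · rintro ⟨h1, h2⟩
        obtain ⟨k, hk, rfl⟩ := (memS_iff x).1 h2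
        rw [(hrfix k hk h1).1]
      · rintro rfl; exact ⟨hwm_rfix, memS m le_rfl⟩
    have hr1 : 1 ≤ (fixes r).card := by
      have : wk q r u m ∈ fixes r := mem_fixes.2 hwm_rfix
      exact card_pos.2 ⟨_, this⟩
    have hcard := flipf_fixes_card (f := r) (g := q) S
    rw [← hr'def, hqS1, hrS1] at hcard
    simp at hcard
    refine ⟨r', hr', by omega, ?_, ?_⟩
    · rw [hr'def, flipf_mem huS, hu]
    · intro x hx
      have : x ∉ S := by
        intro hc
        obtain ⟨k, hk, hkk⟩ := (memS_iff x).1 hc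
        exact hx k hk hkk.symm
      rw [hr'def, flipf_notMem this]


lemma walk_back {q r : V → V} (hq : ∀ x, q (q x) = x) (hr : ∀ x, r (r x) = x)
    {u₁ u₂ : V} {m₁ m₂ : ℕ} (hm : m₁ ≤ m₂) (hpar : m₁ % 2 = m₂ % 2)
    (hend : wk q r u₁ m₁ = wk q r u₂ m₂) :
    ∀ i, i ≤ m₁ → wk q r u₁ (m₁ - i) = wk q r u₂ (m₂ - i) := by
  intro i
  induction i with
  | zero => intro _; simpa using hend
  | succ n IH =>
    intro h
    have e := IH (by omega)
    have h1 := wk_pred hq hr (u := u₁) (m₁ - n - 1)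
    have h2 := wk_pred hq hr (u := u₂) (m₂ - n - 1)
    rw [show m₁ - n - 1 + 1 = m₁ - n by omega] at h1
    rw [show m₂ - n - 1 + 1 = m₂ - n by omega] at h2
    rw [show m₁ - (n+1) = m₁ - n - 1 by omega, show m₂ - (n+1) = m₂ - n - 1 by omega,
        ← h1, ← h2, e, nx_congr hq hr (show (m₁ - n - 1) % 2 = (m₂ - n - 1) % 2 by omega)]

/-- KEY LEMMA: if every vertex is missed by some minimum matching, then no vertex is
adjacent to two exposed vertices of a given minimum matching. -/
lemma no_common_nbr {H : SimpleGraph V}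
    (hmiss : ∀ x : V, ∃ p, IsM H p ∧ (fixes p).card = mfix H ∧ p x = x)
    {q : V → V} (hq : IsM H q) (hqc : (fixes q).card = mfix H)
    {u₁ u₂ w : V} (h1 : q u₁ = u₁) (h2 : q u₂ = u₂) (hne : u₁ ≠ u₂)
    (a1 : H.Adj w u₁) (a2 : H.Adj w u₂) : False := by
  have hqmin : ∀ p, IsM H p → (fixes q).card ≤ (fixes p).card := by
    intro p hp; rw [hqc]; exact mfix_le hp
  obtain ⟨r, hr, hrc, hrw⟩ := hmiss w
  have hrmin : ∀ p, IsM H p → (fixes r).card ≤ (fixes p).card := by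
    intro p hp; rw [hrc]; exact mfix_le hp
  have hru1 : r u₁ ≠ u₁ := by
    intro hcon
    exact fixes_not_adj hr hrmin hrw hcon (H.ne_of_adj a1) a1
  have hru2 : r u₂ ≠ u₂ := by
    intro hcon
    exact fixes_not_adj hr hrmin hrw hcon (H.ne_of_adj a2) a2
  obtain ⟨m₁, ⟨hm₁e, hm₁1⟩, hinj₁, hrfix₁, hqfix₁, hend₁, r₁', hr₁', hc₁, hu₁', hoff₁⟩ :=
    walk_R hq hr hqmin h1 hru1
  obtain ⟨m₂, ⟨hm₂e, hm₂1⟩, hinj₂, hrfix₂, hqfix₂, hend₂, r₂', hr₂', hc₂, hu₂', hoff₂⟩ :=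
    walk_R hq hr hqmin h2 hru2
  by_cases hw1 : ∀ k, k ≤ m₁ → w ≠ wk q r u₁ k
  · have hconmin : ∀ p, IsM H p → (fixes r₁').card ≤ (fixes p).card := by
      intro p hp; rw [hc₁, hrc]; exact mfix_le hp
    have hfw : r₁' w = w := by rw [hoff₁ w hw1]; exact hrw
    exact fixes_not_adj hr₁' hconmin hfw hu₁' (H.ne_of_adj a1) a1
  by_cases hw2 : ∀ k, k ≤ m₂ → w ≠ wk q r u₂ k
  · have hconmin : ∀ p, IsM H p → (fixes r₂').card ≤ (fixes p).card := by
      intro p hp; rw [hc₂, hrc]; exact mfix_le hp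
    have hfw : r₂' w = w := by rw [hoff₂ w hw2]; exact hrw
    exact fixes_not_adj hr₂' hconmin hfw hu₂' (H.ne_of_adj a2) a2
  push_neg at hw1 hw2
  obtain ⟨k₁, hk₁, hwk₁⟩ := hw1
  obtain ⟨k₂, hk₂, hwk₂⟩ := hw2
  have e₁ : k₁ = m₁ := hrfix₁ k₁ hk₁ (by rw [← hwk₁]; exact hrw)
  have e₂ : k₂ = m₂ := hrfix₂ k₂ hk₂ (by rw [← hwk₂]; exact hrw)
  have hend : wk q r u₁ m₁ = wk q r u₂ m₂ := by
    rw [← e₁, ← e₂, ← hwk₁, ← hwk₂]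
  rcases le_total m₁ m₂ with hmle | hmle
  · have hback := walk_back hq.invol hr.invol hmle (by omega) hend m₁ le_rfl
    rw [Nat.sub_self] at hback
    have hu1eq : u₁ = wk q r u₂ (m₂ - m₁) := hback
    have hqf : q (wk q r u₂ (m₂ - m₁)) = wk q r u₂ (m₂ - m₁) := by
      rw [← hu1eq]; exact h1
    have h0 := hqfix₂ (m₂ - m₁) (by omega) hqf
    have : m₁ = m₂ := by omega
    rw [this, Nat.sub_self] at hu1eq
    exact hne hu1eq
  · have hback := walk_back hq.invol hr.invol hmle (by omega) hend.symm m₂ le_rfl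
    rw [Nat.sub_self] at hback
    have hu2eq : u₂ = wk q r u₁ (m₁ - m₂) := hback
    have hqf : q (wk q r u₁ (m₁ - m₂)) = wk q r u₁ (m₁ - m₂) := by
      rw [← hu2eq]; exact h2
    have h0 := hqfix₁ (m₁ - m₂) (by omega) hqf
    have : m₁ = m₂ := by omega
    rw [this, Nat.sub_self] at hu2eq
    exact hne hu2eq.symm

noncomputable def mindeg (H : SimpleGraph V) [DecidableRel H.Adj] : ℕ :=
  sInf (Set.range (fun v => H.degree v))

lemma mindeg_le (H : SimpleGraph V) [DecidableRel H.Adj] (v : V) : mindeg H ≤ H.degree v :=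
  Nat.sInf_le ⟨v, rfl⟩

lemma exists_mindeg (H : SimpleGraph V) [DecidableRel H.Adj] [Nonempty V] :
    ∃ v, H.degree v = mindeg H :=
  Nat.sInf_mem (Set.range_nonempty _)

section Delete

variable {H : SimpleGraph V} [DecidableRel H.Adj] {v : V}

/-- extension of a matching on `V - v` to `V` fixing `v` -/
lemma extM {p' : {x : V // x ≠ v} → {x : V // x ≠ v}}
    (hp' : IsM (H.comap (Subtype.val : {x : V // x ≠ v} → V)) p') :
    ∃ p : V → V, IsM H p ∧ p v = v ∧ (fixes p).card = (fixes p').card + 1 := by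
  classical
  set P : V → V := fun x => if h : x = v then v else (p' ⟨x, h⟩).1 with hPdef
  have hPv : P v = v := by simp [hPdef]
  have hPx : ∀ (x : V) (h : x ≠ v), P x = (p' ⟨x, h⟩).1 := by
    intro x h; simp [hPdef, h]
  refine ⟨P, ⟨?_, ?_⟩, hPv, ?_⟩
  · intro x
    by_cases h : x = v
    · rw [h, hPv, hPv]
    · rw [hPx x h, hPx _ (p' ⟨x, h⟩).2]
      have : (⟨(p' ⟨x, h⟩).1, (p' ⟨x, h⟩).2⟩ : {x : V // x ≠ v}) = p' ⟨x, h⟩ := rfl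
      rw [this, hp'.invol]
  · intro x hx
    by_cases h : x = v
    · rw [h, hPv] at hx; exact absurd rfl hx
    · rw [hPx x h] at hx ⊢
      have hne : p' ⟨x, h⟩ ≠ ⟨x, h⟩ := by
        intro hc; rw [hc] at hx; exact hx rfl
      exact hp'.adj ⟨x, h⟩ hne
  · have : fixes P = insert v ((fixes p').image Subtype.val) := by
      ext x
      rw [mem_fixes, mem_insert]
      by_cases h : x = v
      · simp [h, hPv]
      · rw [hPx x h]
        constructor
        · intro hfix
          right
          refine mem_image.2 ⟨⟨x, h⟩, mem_fixes.2 (Subtype.ext hfix), rfl⟩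
        · rintro (hc | hc)
          · exact absurd hc h
          · obtain ⟨y, hy, hyx⟩ := mem_image.1 hc
            have : y = ⟨x, h⟩ := Subtype.ext hyx
            rw [this] at hy
            rw [mem_fixes.1 hy]
    rw [this, card_insert_of_notMem, card_image_of_injective _ Subtype.val_injective]
    intro hc
    obtain ⟨y, -, hyx⟩ := mem_image.1 hc
    exact y.2 hyx

lemma deg_del [DecidableRel (H.comap (Subtype.val : {x : V // x ≠ v} → V)).Adj]
    (x' : {x : V // x ≠ v}) :
    H.degree x'.1 ≤ (H.comap (Subtype.val : {x : V // x ≠ v} → V)).degree x' + 1 := by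
  classical
  rw [SimpleGraph.degree, SimpleGraph.degree, SimpleGraph.neighborFinset_eq_filter,
    SimpleGraph.neighborFinset_eq_filter]
  have hsub : univ.filter (fun w => H.Adj x'.1 w) ⊆
      insert v (((univ : Finset {x : V // x ≠ v}).filter
        (fun y => (H.comap (Subtype.val : {x : V // x ≠ v} → V)).Adj x' y)).image Subtype.val) := by
    intro y hy
    rw [mem_filter] at hy
    by_cases h : y = v
    · rw [h]; exact mem_insert_self _ _
    · refine mem_insert_of_mem (mem_image.2 ⟨⟨y, h⟩, mem_filter.2 ⟨mem_univ _, hy.2⟩, rfl⟩)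
  have h1 := card_le_card hsub
  have hgoal1 : (univ.filter (fun w => H.Adj x'.1 w)) = (univ.filter (H.Adj x'.1)) := rfl
  have h2 := card_insert_le v (((univ : Finset {x : V // x ≠ v}).filter
        (fun y => (H.comap (Subtype.val : {x : V // x ≠ v} → V)).Adj x' y)).image Subtype.val)
  have h3 := card_image_le (s := (univ : Finset {x : V // x ≠ v}).filter
        (fun y => (H.comap (Subtype.val : {x : V // x ≠ v} → V)).Adj x' y)) (f := Subtype.val)
  omega

end Delete

/-- MAIN COMBINATORIAL LEMMA: in a triangle-free graph,
(minimum number of exposed vertices) + (minimum degree) ≤ (some independent set size) + 1. -/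
lemma main_ind : ∀ (n : ℕ) {V : Type u} [Fintype V] [DecidableEq V]
    (H : SimpleGraph V) [DecidableRel H.Adj], Fintype.card V = n →
    (∀ a b c : V, H.Adj a b → H.Adj a c → H.Adj b c → False) →
    ∃ I : Finset V, (∀ a ∈ I, ∀ b ∈ I, a ≠ b → ¬ H.Adj a b) ∧
      mfix H + mindeg H ≤ I.card + 1 := by
  intro n
  induction n using Nat.strong_induction_on with
  | _ n IH =>
  intro V _ _ H _ hcard htf
  by_cases hmiss : ∀ x : V, ∃ p, IsM H p ∧ (fixes p).card = mfix H ∧ p x = x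
  · -- Case 2 : every vertex is missed by some minimum matching
    rcases isEmpty_or_nonempty V with hV | hV
    · refine ⟨∅, by simp, ?_⟩
      have h1 : mfix H ≤ 0 := by
        have := mfix_le (isM_id H)
        have h2 : (fixes (id : V → V)).card ≤ Fintype.card V := by
          rw [← card_univ]; exact card_le_card (filter_subset _ _)
        rw [Fintype.card_eq_zero] at h2
        omega
      have h2 : mindeg H = 0 := by
        rw [mindeg, Set.range_eq_empty, Nat.sInf_empty]
      simp [h2]
      omega
    · obtain ⟨v, hv⟩ := exists_mindeg H
      obtain ⟨q, hq, hqc, hqv⟩ := hmiss v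
      have hqmin : ∀ p, IsM H p → (fixes q).card ≤ (fixes p).card := by
        intro p hp; rw [hqc]; exact mfix_le hp
      set I : Finset V := ((fixes q).erase v) ∪ H.neighborFinset v with hIdef
      have hdisj : Disjoint ((fixes q).erase v) (H.neighborFinset v) := by
        rw [disjoint_left]
        intro x hx hnx
        have h1 : q x = x := mem_fixes.1 (mem_of_mem_erase hx)
        have h2 : x ≠ v := (mem_erase.1 hx).1
        have h3 : H.Adj v x := (SimpleGraph.mem_neighborFinset _ _ _).1 hnx
        exact fixes_not_adj hq hqmin hqv h1 (fun hc => h2 hc.symm) h3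
      have hvfix : v ∈ fixes q := mem_fixes.2 hqv
      have hcardI : I.card = ((fixes q).card - 1) + H.degree v := by
        rw [hIdef, card_union_of_disjoint hdisj, card_erase_of_mem hvfix]
        rfl
      refine ⟨I, ?_, ?_⟩
      · intro a ha b hb hab hadj
        rw [hIdef, mem_union] at ha hb
        rcases ha with ha | ha <;> rcases hb with hb | hb
        · exact fixes_not_adj hq hqmin (mem_fixes.1 (mem_of_mem_erase ha))
            (mem_fixes.1 (mem_of_mem_erase hb)) hab hadj
        · -- a exposed (≠ v), b neighbor of v : b is adjacent to exposed a and exposed v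
          exact no_common_nbr hmiss hq hqc hqv (mem_fixes.1 (mem_of_mem_erase ha))
            (fun hc => (mem_erase.1 ha).1 hc.symm)
            ((SimpleGraph.mem_neighborFinset _ _ _).1 hb).symm hadj.symm
        · exact no_common_nbr hmiss hq hqc hqv (mem_fixes.1 (mem_of_mem_erase hb))
            (fun hc => (mem_erase.1 hb).1 hc.symm)
            ((SimpleGraph.mem_neighborFinset _ _ _).1 ha).symm hadj
        · exact htf v a b ((SimpleGraph.mem_neighborFinset _ _ _).1 ha)
            ((SimpleGraph.mem_neighborFinset _ _ _).1 hb) hadj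
      · have h1 : 1 ≤ (fixes q).card := card_pos.2 ⟨v, hvfix⟩
        rw [hcardI, ← hqc, ← hv]
        omega
  · -- Case 1 : some vertex is covered by every minimum matching
    push_neg at hmiss
    obtain ⟨v, hv⟩ := hmiss
    have hv' : ∀ p, IsM H p → (fixes p).card = mfix H → p v ≠ v := by
      intro p hp hpc hpv
      exact (hv p hp hpc hpv).elim
    clear hv
    -- v has an edge (a minimum matching matches it), so `V` is nonempty etc.
    obtain ⟨q0, hq0, hq0c⟩ := mfix_exists H
    have hq0v : q0 v ≠ v := hv' q0 hq0 hq0c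
    haveI : DecidableRel (H.comap (Subtype.val : {x : V // x ≠ v} → V)).Adj :=
      fun a b => ‹DecidableRel H.Adj› a.1 b.1
    set H' := H.comap (Subtype.val : {x : V // x ≠ v} → V) with hH'def
    have hcard' : Fintype.card {x : V // x ≠ v} = n - 1 := by
      rw [Fintype.card_subtype]
      rw [filter_ne' univ v, card_erase_of_mem (mem_univ v), card_univ, hcard]
    have hn1 : 1 ≤ n := by
      rw [← hcard]
      exact Fintype.card_pos_iff.2 ⟨v⟩
    have htf' : ∀ a b c, H'.Adj a b → H'.Adj a c → H'.Adj b c → False := by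
      intro a b c h1 h2 h3
      exact htf a.1 b.1 c.1 h1 h2 h3
    obtain ⟨I', hI'ind, hI'⟩ := IH (n-1) (by omega) H' hcard' htf'
    -- min matchings of H' are at least mfix H + 1
    have hkey : mfix H + 1 ≤ mfix H' := by
      obtain ⟨p', hp', hp'c⟩ := mfix_exists H'
      obtain ⟨P, hP, hPv, hPc⟩ := extM hp'
      have h1 : mfix H ≤ (fixes P).card := mfix_le hP
      have h2 : (fixes P).card ≠ mfix H := by
        intro hc
        exact hv' P hP hc hPv
      obtain ⟨a, ha⟩ := fixes_card_parity hP.invol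
      obtain ⟨b, hb⟩ := fixes_card_parity hq0.invol
      rw [hq0c] at hb
      omega
    -- min degree decreases by at most one
    haveI : Nonempty {x : V // x ≠ v} := ⟨⟨q0 v, hq0v⟩⟩
    obtain ⟨x', hx'⟩ := exists_mindeg H'
    have hdeg : mindeg H ≤ mindeg H' + 1 := by
      have h1 := mindeg_le H x'.1
      have h2 : H.degree x'.1 ≤ H'.degree x' + 1 := deg_del (H := H) x'
      omega
    refine ⟨I'.image Subtype.val, ?_, ?_⟩
    · intro a ha b hb hab hadj
      obtain ⟨a', ha', rfl⟩ := mem_image.1 ha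
      obtain ⟨b', hb', rfl⟩ := mem_image.1 hb
      exact hI'ind a' ha' b' hb' (fun hc => hab (by rw [hc])) hadj
    · rw [card_image_of_injective _ Subtype.val_injective]
      omega

end S9

open SimpleGraph

theorem stmt9 {V : Type*} [Fintype V] (G : SimpleGraph V) [DecidableRel G.Adj]
    (h3 : ThreeK1Free G) :
    G.chromaticNumber ≤ (((G.maxDegree + G.cliqueNum + 1 + 1) / 2 : ℕ) : ℕ∞) := by
  classical
  set H := Gᶜ with hHdef
  haveI : DecidableRel H.Adj := fun a b => inferInstanceAs (Decidable (a ≠ b ∧ ¬ G.Adj a b))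
  have htf : ∀ a b c : V, H.Adj a b → H.Adj a c → H.Adj b c → False := by
    intro a b c hab hac hbc
    rw [hHdef, compl_adj] at hab hac hbc
    rcases h3 a b c hab.1 hac.1 hbc.1 with h | h | h
    · exact hab.2 h
    · exact hac.2 h
    · exact hbc.2 h
  obtain ⟨I, hind, hineq⟩ := S9.main_ind (Fintype.card V) H rfl htf
  -- the independent set of the complement is a clique
  have hclique : G.IsClique ↑I := by
    intro a ha b hb hne
    by_contra hc
    exact hind a ha b hb hne ((compl_adj G a b).2 ⟨hne, hc⟩)
  have hω : I.card ≤ G.cliqueNum := IsClique.card_le_cliqueNum (tc := hclique)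
  -- max degree bound
  have hmd : Fintype.card V ≤ G.maxDegree + S9.mindeg H + 1 := by
    rcases isEmpty_or_nonempty V with hV | hV
    · rw [Fintype.card_eq_zero]; omega
    · obtain ⟨x, hx⟩ := S9.exists_mindeg H
      have hcover : Finset.univ.erase x ⊆ G.neighborFinset x ∪ H.neighborFinset x := by
        intro y hy
        have hne : y ≠ x := (Finset.mem_erase.1 hy).1
        by_cases hadj : G.Adj x y
        · exact Finset.mem_union_left _ ((SimpleGraph.mem_neighborFinset _ _ _).2 hadj)
        · refine Finset.mem_union_right _ ((SimpleGraph.mem_neighborFinset _ _ _).2 ?_)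
          rw [hHdef, compl_adj]
          exact ⟨fun hcc => hne hcc.symm, hadj⟩
      have h4 := Finset.card_le_card hcover
      have h5 := Finset.card_union_le (G.neighborFinset x) (H.neighborFinset x)
      rw [Finset.card_erase_of_mem (Finset.mem_univ x), Finset.card_univ] at h4
      have h3 : G.degree x ≤ G.maxDegree := G.degree_le_maxDegree x
      have h6 : G.degree x = (G.neighborFinset x).card := rfl
      have h7 : H.degree x = (H.neighborFinset x).card := rfl
      omega
  -- a minimum matching of the complement
  obtain ⟨p, hp, hpc⟩ := S9.mfix_exists H
  set e := Fintype.equivFin V with hedef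
  set rep : V → V := fun x => if e (p x) ≤ e x then p x else x with hrepdef
  have hrep_cases : ∀ x, rep x = x ∨ rep x = p x := by
    intro x
    simp only [hrepdef]
    split_ifs
    · exact Or.inr rfl
    · exact Or.inl rfl
  have hrep_fix : ∀ x, p x = x → rep x = x := by
    intro x hfix
    rcases hrep_cases x with h | h
    · exact h
    · rw [h, hfix]
  have hrep_p : ∀ x, rep (p x) = rep x := by
    intro x
    simp only [hrepdef, hp.invol]
    split_ifs with h1 h2 h2
    · exact e.injective (le_antisymm h1 h2)
    · rfl
    · rfl
    · exact absurd (le_of_not_ge h1) h2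
  -- proper coloring by representatives
  have hvalid : ∀ {a b : V}, G.Adj a b → rep a ≠ rep b := by
    intro a b hadj hc
    have hne : a ≠ b := G.ne_of_adj hadj
    rcases hrep_cases a with ha | ha <;> rcases hrep_cases b with hb | hb
    · rw [ha, hb] at hc; exact hne hc
    · rw [ha, hb] at hc
      -- a = p b
      have hpbb : p b ≠ b := by intro hfix; rw [hfix] at hc; exact hne hc
      have : H.Adj b (p b) := hp.adj b hpbb
      rw [hHdef, compl_adj, ← hc] at this
      exact this.2 hadj.symm
    · rw [ha, hb] at hc
      have hpaa : p a ≠ a := by intro hfix; rw [hfix] at hc; exact hne hc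
      have : H.Adj a (p a) := hp.adj a hpaa
      rw [hHdef, compl_adj, hc] at this
      exact this.2 hadj
    · rw [ha, hb] at hc
      have : p (p a) = p (p b) := by rw [hc]
      rw [hp.invol, hp.invol] at this
      exact hne this
  -- number of colors
  set colors := (Finset.univ.image rep).card with hcolorsdef
  have hcolbound : 2 * colors ≤ Fintype.card V + S9.mfix H := by
    set s := Finset.univ.filter (fun x => ¬ p x = x) with hsdef
    have hsub : Finset.univ.image rep ⊆ S9.fixes p ∪ s.image rep := by
      intro y hy
      obtain ⟨x, -, rfl⟩ := Finset.mem_image.1 hy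
      by_cases hfix : p x = x
      · rw [hrep_fix x hfix]
        exact Finset.mem_union_left _ (S9.mem_fixes.2 hfix)
      · exact Finset.mem_union_right _
          (Finset.mem_image.2 ⟨x, Finset.mem_filter.2 ⟨Finset.mem_univ _, hfix⟩, rfl⟩)
    have himg : 2 * (s.image rep).card ≤ s.card := by
      have hsum := Finset.card_eq_sum_card_image rep s
      have hterm : ∀ b ∈ s.image rep, 2 ≤ (s.filter (fun a => rep a = b)).card := by
        intro b hb
        obtain ⟨x, hx, rfl⟩ := Finset.mem_image.1 hb
        have hxs : x ∈ s := hx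
        have hnfix : p x ≠ x := (Finset.mem_filter.1 hx).2
        have hpxs : p x ∈ s := by
          rw [hsdef, Finset.mem_filter]
          refine ⟨Finset.mem_univ _, ?_⟩
          rw [hp.invol]
          exact fun hcc => hnfix hcc.symm
        have hpair : {x, p x} ⊆ s.filter (fun a => rep a = rep x) := by
          intro z hz
          rcases Finset.mem_insert.1 hz with rfl | hz
          · exact Finset.mem_filter.2 ⟨hxs, rfl⟩
          · rw [Finset.mem_singleton.1 hz]
            exact Finset.mem_filter.2 ⟨hpxs, hrep_p x⟩
        calc 2 = ({x, p x} : Finset V).card := by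
              rw [Finset.card_insert_of_notMem
                (by rw [Finset.mem_singleton]; exact fun hcc => hnfix hcc.symm),
                Finset.card_singleton]
        _ ≤ _ := Finset.card_le_card hpair
      have := Finset.card_nsmul_le_sum (s.image rep) (fun b => (s.filter (fun a => rep a = b)).card) 2 hterm
      simp only [smul_eq_mul] at this
      omega
    have h1 := Finset.card_le_card hsub
    have h2 := Finset.card_union_le (S9.fixes p) (s.image rep)
    have h3 : (S9.fixes p).card + s.card = Fintype.card V := by
      rw [← Finset.card_univ]
      rw [S9.fixes, ← Finset.card_filter_add_card_filter_not
        (s := (Finset.univ : Finset V)) (p := fun x => p x = x)]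
    rw [← hpc]
    omega
  -- build the coloring
  have hcol : G.Colorable colors := by
    have C : G.Coloring {y // y ∈ Finset.univ.image rep} :=
      SimpleGraph.Coloring.mk
        (fun v => ⟨rep v, Finset.mem_image_of_mem rep (Finset.mem_univ v)⟩)
        (fun hadj hc => hvalid hadj (by injection hc))
    have := C.colorable
    rwa [Fintype.card_coe] at this
  have hfinal : colors ≤ (G.maxDegree + G.cliqueNum + 1 + 1) / 2 := by
    have hB : S9.mfix H + S9.mindeg H ≤ G.cliqueNum + 1 := le_trans hineq (by omega)
    omega
  exact (hcol.mono hfinal).chromaticNumber_le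
end

section
/- Let G be {3K₁, K₁+C₄}-free with non-adjacent vertices v, w, A = N(v) ∩ N(w), A₁ a maximal clique in ⟨A⟩, A₂ = A \ A₁, and B = N(v) \ (A ∪ {w}). Define B₂ = {b ∈ B : b is adjacent to every vertex of A}. Then A₁ ∪ B₂ ∪ {v} induces a clique, so |A₁| + |B₂| + 1 ≤ ω(G). -/
open SimpleGraph

theorem stmt17 {V : Type*} [Fintype V] (G : SimpleGraph V)
    (h3 : ThreeK1Free G) (h4 : K1C4Free G)
    (v w : V) (hvw : v ≠ w) (hnadj : ¬ G.Adj v w)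
    (A A₁ B B₂ : Set V)
    (hA : A = G.neighborSet v ∩ G.neighborSet w)
    (hA₁sub : A₁ ⊆ A) (hA₁clq : A₁.Pairwise G.Adj)
    (hA₁max : ∀ S : Set V, A₁ ⊆ S → S ⊆ A → S.Pairwise G.Adj → S = A₁)
    (hB : B = G.neighborSet v \ (A ∪ {w}))
    (hB₂ : B₂ = {b ∈ B | ∀ a ∈ A, G.Adj b a}) :
    (A₁ ∪ B₂ ∪ {v}).Pairwise G.Adj ∧ A₁.ncard + B₂.ncard + 1 ≤ G.cliqueNum := by
  classical
  -- basic facts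
  have hA₁v : ∀ a ∈ A₁, G.Adj v a := by
    intro a ha
    have := hA₁sub ha
    rw [hA] at this
    exact this.1
  have hB₂v : ∀ b ∈ B₂, G.Adj v b := by
    intro b hb
    rw [hB₂] at hb
    have := hb.1
    rw [hB] at this
    exact this.1
  have hB₂A : ∀ b ∈ B₂, ∀ a ∈ A, G.Adj b a := by
    intro b hb
    rw [hB₂] at hb
    exact hb.2
  have hB₂w : ∀ b ∈ B₂, b ≠ w ∧ ¬ G.Adj b w := by
    intro b hb
    rw [hB₂] at hb
    have hbB := hb.1
    rw [hB] at hbB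
    obtain ⟨hbv, hbn⟩ := hbB
    constructor
    · intro h; exact hbn (Or.inr (by simp [h]))
    · intro h
      exact hbn (Or.inl (by rw [hA]; exact ⟨hbv, G.adj_symm h⟩))
  have hB₂clq : B₂.Pairwise G.Adj := by
    intro b hb b' hb' hne
    have h1 := hB₂w b hb
    have h2 := hB₂w b' hb'
    rcases h3 b b' w hne h1.1 h2.1 with h | h | h
    · exact h
    · exact absurd h h1.2
    · exact absurd h h2.2
  have hvA₁ : v ∉ A₁ := fun h => G.irrefl (hA₁v v h)
  have hvB₂ : v ∉ B₂ := fun h => G.irrefl (hB₂v v h)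
  have hdisj : Disjoint A₁ B₂ := by
    rw [Set.disjoint_left]
    intro x hx hx'
    rw [hB₂, hB] at hx'
    exact hx'.1.2 (Or.inl (hA₁sub hx))
  have hclq : (A₁ ∪ B₂ ∪ {v}).Pairwise G.Adj := by
    intro x hx y hy hne
    rcases hx with (hx | hx) | hx <;> rcases hy with (hy | hy) | hy
    · exact hA₁clq hx hy hne
    · exact G.adj_symm ((hB₂A y hy x (hA₁sub hx)))
    · rw [hy]; exact G.adj_symm (hA₁v x hx)
    · exact hB₂A x hx y (hA₁sub hy)
    · exact hB₂clq hx hy hne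
    · rw [hy]; exact G.adj_symm (hB₂v x hx)
    · rw [hx]; exact hA₁v y hy
    · rw [hx]; exact hB₂v y hy
    · exact absurd (hx.trans hy.symm) hne
  refine ⟨hclq, ?_⟩
  have hS : (A₁ ∪ B₂ ∪ {v}).ncard = A₁.ncard + B₂.ncard + 1 := by
    rw [Set.ncard_union_eq (by
        rw [Set.disjoint_right]
        rintro x rfl
        intro hx
        rcases hx with hx | hx
        exacts [hvA₁ hx, hvB₂ hx])
      ((Set.toFinite _)) (Set.toFinite _),
      Set.ncard_union_eq hdisj (Set.toFinite _) (Set.toFinite _), Set.ncard_singleton]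
  rw [← hS]
  have hfin : (A₁ ∪ B₂ ∪ {v}).Finite := Set.toFinite _
  have : G.IsClique (hfin.toFinset : Finset V) := by
    intro x hx y hy hne
    simp only [Finset.coe_sort_coe, Set.Finite.coe_toFinset] at hx hy
    exact hclq hx hy hne
  have hle := SimpleGraph.IsClique.card_le_cliqueNum (tc := this)
  rwa [← Set.ncard_coe_finset, Set.Finite.coe_toFinset] at hle
end
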